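/- On a pseudo-Hermitian vector space (V,⟨·,·⟩,J) of dimension m, for any linear functional φ the tensor σ(φ)(x,y;z) := φ(Jx)⟨y,z⟩ − φ(Jy)⟨x,z⟩ + φ(x)⟨Jy,z⟩ − φ(y)⟨Jx,z⟩ lies in 𝔥₋, and its contraction satisfies τ₁(σ(φ)) = (m−2)·(φ∘J), where τ₁(H)(x) := Σ ε^{ij} H(x,e_i;e_j) for an orthonormal-type basis {e_i} with ε_{ij} = ⟨e_i,e_j⟩. -/

import Mathlib

/-!
Contracting with the inverse Gram matrix recovers coordinates: `∑ⱼ ε^{ij} ⟨w, eⱼ⟩` is the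
`i`-th coordinate of `w`. Hence `∑ ε^{ij} ⟨T eᵢ, eⱼ⟩ = tr T`, which is `m` for `T = id` and `0`
for `T = J`, since `J` is skew-adjoint and `ε^{ij}` is symmetric; and each of the two terms of
`σ(φ)(x, eᵢ; eⱼ)` in which `φ` is evaluated at `eᵢ` contracts to `φ(Jx)`. Altogether
`τ₁(σ(φ)) = (m - 1 - 1) φ ∘ J`.
-/

/-- `σ(φ)(x,y;z) := φ(Jx)⟨y,z⟩ − φ(Jy)⟨x,z⟩ + φ(x)⟨Jy,z⟩ − φ(y)⟨Jx,z⟩`. -/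
noncomputable def sigmaT {V : Type*} [AddCommGroup V] [Module ℝ V]
    (B : V →ₗ[ℝ] V →ₗ[ℝ] ℝ) (J : V →ₗ[ℝ] V) (φ : V →ₗ[ℝ] ℝ) (x y z : V) : ℝ :=
  φ (J x) * B y z - φ (J y) * B x z + φ x * B (J y) z - φ y * B (J x) z

open Module Matrix

section Gram

variable {V ι : Type*} [AddCommGroup V] [Module ℝ V] [Fintype ι]
  {B : V →ₗ[ℝ] V →ₗ[ℝ] ℝ} (b : Basis ι ℝ V) {Einv : Matrix ι ι ℝ}

theorem Module.Basis.sum_repr_mul_apply (ψ : V →ₗ[ℝ] ℝ) (w : V) :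
    ∑ i, b.repr w i * ψ (b i) = ψ w := by
  conv_rhs => rw [← b.sum_repr w]
  simp only [map_sum, map_smul, smul_eq_mul]

variable [DecidableEq ι]

theorem sum_invGram_mul_apply (hB : ∀ x y, B x y = B y x)
    (hE : Einv * Matrix.of (fun i j => B (b i) (b j)) = 1) (w : V) (i : ι) :
    ∑ j, Einv i j * B w (b j) = b.repr w i := by
  set G : Matrix ι ι ℝ := Matrix.of fun i j => B (b i) (b j)
  have hw : (fun j => B w (b j)) = G *ᵥ b.repr w := by
    ext j
    rw [hB, ← b.sum_repr_mul_apply (B (b j)) w]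
    simp only [mulVec, dotProduct, G, of_apply, mul_comm]
  change (Einv *ᵥ fun j => B w (b j)) i = _
  rw [hw, mulVec_mulVec, hE, one_mulVec]

theorem invGram_symm (hB : ∀ x y, B x y = B y x)
    (hE : Einv * Matrix.of (fun i j => B (b i) (b j)) = 1) : Einv.IsSymm := by
  rw [← inv_eq_left_inv hE]
  exact IsSymm.inv (IsSymm.ext fun i j => hB _ _)

theorem sum_invGram_mul_apply_apply (hB : ∀ x y, B x y = B y x)
    (hE : Einv * Matrix.of (fun i j => B (b i) (b j)) = 1) (T : V →ₗ[ℝ] V) :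
    ∑ i, ∑ j, Einv i j * B (T (b i)) (b j) = LinearMap.trace ℝ V T := by
  simp only [sum_invGram_mul_apply b hB hE, LinearMap.trace_eq_matrix_trace ℝ b, Matrix.trace,
    diag, LinearMap.toMatrix_apply]

theorem sum_invGram_mul_mul_apply (hB : ∀ x y, B x y = B y x)
    (hE : Einv * Matrix.of (fun i j => B (b i) (b j)) = 1) (ψ : V →ₗ[ℝ] ℝ) (w : V) :
    ∑ i, ∑ j, Einv i j * (ψ (b i) * B w (b j)) = ψ w := by
  calc ∑ i, ∑ j, Einv i j * (ψ (b i) * B w (b j))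
      = ∑ i, ψ (b i) * ∑ j, Einv i j * B w (b j) := by
        simp only [Finset.mul_sum, mul_left_comm]
    _ = ψ w := by
        simp only [sum_invGram_mul_apply b hB hE, mul_comm (ψ _), b.sum_repr_mul_apply]

theorem LinearMap.trace_eq_zero_of_isSkewAdjoint (hB : ∀ x y, B x y = B y x)
    (hE : Einv * Matrix.of (fun i j => B (b i) (b j)) = 1) {T : V →ₗ[ℝ] V}
    (hT : ∀ x y, B (T x) y = -B x (T y)) : LinearMap.trace ℝ V T = 0 := by
  have hsymm := invGram_symm b hB hE
  rw [← sum_invGram_mul_apply_apply b hB hE]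
  suffices h : ∑ i, ∑ j, Einv i j * B (T (b i)) (b j) = -∑ i, ∑ j, Einv i j * B (T (b i)) (b j) by
    linarith
  rw [← Finset.sum_neg_distrib, Finset.sum_comm]
  refine Finset.sum_congr rfl fun i _ => ?_
  rw [← Finset.sum_neg_distrib]
  refine Finset.sum_congr rfl fun j _ => ?_
  rw [hsymm.apply i j, hT, hB, mul_neg]

end Gram

theorem apply_eq_neg_apply_of_isometry {V : Type*} [AddCommGroup V] [Module ℝ V]
    {B : V →ₗ[ℝ] V →ₗ[ℝ] ℝ} {J : V →ₗ[ℝ] V} (hJ2 : ∀ x, J (J x) = -x)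
    (hJB : ∀ x y, B (J x) (J y) = B x y) (x y : V) : B (J x) y = -B x (J y) := by
  rw [← hJB, hJ2, map_neg, LinearMap.neg_apply]

section SigmaT

variable {V : Type*} [AddCommGroup V] [Module ℝ V] (B : V →ₗ[ℝ] V →ₗ[ℝ] ℝ) {J : V →ₗ[ℝ] V}
  (φ : V →ₗ[ℝ] ℝ)

theorem sigmaT_swap (x y z : V) : sigmaT B J φ x y z = -sigmaT B J φ y x z := by
  simp only [sigmaT]
  ring

theorem sigmaT_apply_apply_of_sq_eq_neg_one (hJ2 : ∀ x, J (J x) = -x) (x y z : V) :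
    sigmaT B J φ (J x) (J y) z = -sigmaT B J φ x y z := by
  simp only [sigmaT, hJ2, map_neg, LinearMap.neg_apply]
  ring

end SigmaT

theorem stmt_10_general {V : Type*} [AddCommGroup V] [Module ℝ V] {m : ℕ}
    (B : V →ₗ[ℝ] V →ₗ[ℝ] ℝ) (J : V →ₗ[ℝ] V)
    (hBsymm : ∀ x y, B x y = B y x)
    (hJ2 : ∀ x, J (J x) = -x)
    (hJB : ∀ x y, B (J x) (J y) = B x y)
    (φ : V →ₗ[ℝ] ℝ)
    (b : Module.Basis (Fin m) ℝ V)
    (Einv : Matrix (Fin m) (Fin m) ℝ)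
    (hE1 : Einv * (Matrix.of fun i j => B (b i) (b j)) = 1) :
    ((∀ x y z, sigmaT B J φ x y z = - sigmaT B J φ y x z) ∧
     (∀ x y z, sigmaT B J φ (J x) (J y) z = - sigmaT B J φ x y z)) ∧
    (∀ x, ∑ i, ∑ j, Einv i j * sigmaT B J φ x (b i) (b j) = ((m : ℝ) - 2) * φ (J x)) := by
  refine ⟨⟨sigmaT_swap B φ, sigmaT_apply_apply_of_sq_eq_neg_one B φ hJ2⟩, fun x => ?_⟩
  have hm : ∑ i, ∑ j, Einv i j * B (b i) (b j) = m := by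
    have : Module.Finite ℝ V := .of_basis b
    have h := sum_invGram_mul_apply_apply b hBsymm hE1 LinearMap.id
    rwa [LinearMap.trace_id, finrank_eq_card_basis b, Fintype.card_fin] at h
  have hJ : ∑ i, ∑ j, Einv i j * B (J (b i)) (b j) = 0 := by
    rw [sum_invGram_mul_apply_apply b hBsymm hE1,
      LinearMap.trace_eq_zero_of_isSkewAdjoint b hBsymm hE1 (apply_eq_neg_apply_of_isometry hJ2 hJB)]
  calc ∑ i, ∑ j, Einv i j * sigmaT B J φ x (b i) (b j)
      = φ (J x) * ∑ i, ∑ j, Einv i j * B (b i) (b j)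
          - ∑ i, ∑ j, Einv i j * ((φ ∘ₗ J) (b i) * B x (b j))
          + φ x * ∑ i, ∑ j, Einv i j * B (J (b i)) (b j)
          - ∑ i, ∑ j, Einv i j * (φ (b i) * B (J x) (b j)) := by
        simp only [sigmaT, Finset.mul_sum, ← Finset.sum_sub_distrib, ← Finset.sum_add_distrib,
          LinearMap.comp_apply]
        refine Finset.sum_congr rfl fun i _ => Finset.sum_congr rfl fun j _ => ?_
        ring
    _ = ((m : ℝ) - 2) * φ (J x) := by
        rw [hm, hJ, sum_invGram_mul_mul_apply b hBsymm hE1, sum_invGram_mul_mul_apply b hBsymm hE1,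
          LinearMap.comp_apply]
        ring

/-- On a pseudo-Hermitian vector space of dimension `m`, `σ(φ) ∈ 𝔥₋` and
`τ₁(σ(φ)) = (m-2)·(φ ∘ J)`, where `τ₁(H)(x) = Σ ε^{ij} H(x,e_i;e_j)` for a basis
`{e_i}` with Gram matrix `ε_{ij} = ⟨e_i,e_j⟩` and inverse matrix `ε^{ij}`. -/
theorem stmt_10 {V : Type*} [AddCommGroup V] [Module ℝ V] {m : ℕ}
    (B : V →ₗ[ℝ] V →ₗ[ℝ] ℝ) (J : V →ₗ[ℝ] V)
    (hBsymm : ∀ x y, B x y = B y x)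
    (hBnd : ∀ x, (∀ y, B x y = 0) → x = 0)
    (hJ2 : ∀ x, J (J x) = -x)
    (hJB : ∀ x y, B (J x) (J y) = B x y)
    (φ : V →ₗ[ℝ] ℝ)
    (b : Module.Basis (Fin m) ℝ V)
    (Einv : Matrix (Fin m) (Fin m) ℝ)
    (hE1 : Einv * (Matrix.of fun i j => B (b i) (b j)) = 1)
    (hE2 : (Matrix.of fun i j => B (b i) (b j)) * Einv = 1) :
    ((∀ x y z, sigmaT B J φ x y z = - sigmaT B J φ y x z) ∧
     (∀ x y z, sigmaT B J φ (J x) (J y) z = - sigmaT B J φ x y z)) ∧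
    (∀ x, ∑ i, ∑ j, Einv i j * sigmaT B J φ x (b i) (b j) = ((m : ℝ) - 2) * φ (J x)) :=
  stmt_10_general B J hBsymm hJ2 hJB φ b Einv hE1
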